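/- In Belnap–Dunn logic BD, for all formulas A₁, A₂ over the connectives ¬, ∧, ∨: A₁ and A₂ are synonymous (every formula B₁ is interderivable with any formula B₂ obtained from B₁ by replacing some or all occurrences of A₁ by A₂) if and only if A₁ ⊨ A₂, A₂ ⊨ A₁, ¬A₁ ⊨ ¬A₂, and ¬A₂ ⊨ ¬A₁. -/
import Mathlib


namespace BD7

/-- The four truth values of Belnap-Dunn logic:
`t` (true), `f` (false), `b` (both true and false), `n` (neither true nor false). -/
inductive V4 : Type
  | t | f | b | n
deriving DecidableEq, Repr

namespace V4

/-- `a` lies above truth in the Belnap-Dunn bilattice (i.e. `a ∈ {t, b}`). -/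
def hasT : V4 → Bool
  | t => true
  | b => true
  | _ => false

/-- `a` lies above falsity in the Belnap-Dunn bilattice (i.e. `a ∈ {f, b}`). -/
def hasF : V4 → Bool
  | f => true
  | b => true
  | _ => false

def ofTF : Bool → Bool → V4
  | true, true => b
  | true, false => t
  | false, true => f
  | false, false => n

/-- Interpretation of ¬: swaps `t` and `f`, fixes `b` and `n`. -/
def neg4 : V4 → V4
  | t => f
  | f => t
  | b => b
  | n => n

/-- Interpretation of ∧: greatest lower bound in the lattice order on `V4`
with `f` least, `t` greatest, `b` and `n` incomparable. -/
def and4 (x y : V4) : V4 := ofTF (x.hasT && y.hasT) (x.hasF || y.hasF)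

/-- Interpretation of ∨: least upper bound in the lattice order on `V4`
with `f` least, `t` greatest, `b` and `n` incomparable. -/
def or4 (x y : V4) : V4 := ofTF (x.hasT || y.hasT) (x.hasF && y.hasF)

/-- Interpretation of →: `a₁ → a₂ = t` if `a₁ ∉ {t, b}`, and `a₂` otherwise. -/
def imp4 (x y : V4) : V4 := if x = t ∨ x = b then y else t

/-- The designated truth values: `t` and `b`. -/
def desig (x : V4) : Prop := x = t ∨ x = b

end V4

/-- Formulas of Belnap-Dunn logic over the connectives ¬, ∧, ∨, with a
countably infinite supply of propositional variables. -/
inductive Fm : Type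
  | var : ℕ → Fm
  | neg : Fm → Fm
  | and : Fm → Fm → Fm
  | or : Fm → Fm → Fm
deriving DecidableEq

/-- The valuation in the Belnap-Dunn matrix determined by an assignment of
truth values to the propositional variables. -/
def val (v : ℕ → V4) : Fm → V4
  | .var p => v p
  | .neg A => V4.neg4 (val v A)
  | .and A B => V4.and4 (val v A) (val v B)
  | .or A B => V4.or4 (val v A) (val v B)

/-- The consequence relation of Belnap-Dunn logic, induced by the Belnap-Dunn
matrix. -/
def Con (Γ Δ : Set Fm) : Prop :=
  ∀ v : ℕ → V4, (∀ A ∈ Γ, V4.desig (val v A)) → ∃ B ∈ Δ, V4.desig (val v B)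

/-- `Repl A₁ A₂ B₁ B₂` holds iff `B₂` is `B₁` with some or all occurrences of
`A₁` replaced by `A₂`. -/
inductive Repl (A₁ A₂ : Fm) : Fm → Fm → Prop
  | refl (B : Fm) : Repl A₁ A₂ B B
  | repl : Repl A₁ A₂ A₁ A₂
  | neg {B₁ B₂ : Fm} : Repl A₁ A₂ B₁ B₂ → Repl A₁ A₂ (Fm.neg B₁) (Fm.neg B₂)
  | and {B₁ B₂ C₁ C₂ : Fm} : Repl A₁ A₂ B₁ B₂ → Repl A₁ A₂ C₁ C₂ →
      Repl A₁ A₂ (Fm.and B₁ C₁) (Fm.and B₂ C₂)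
  | or {B₁ B₂ C₁ C₂ : Fm} : Repl A₁ A₂ B₁ B₂ → Repl A₁ A₂ C₁ C₂ →
      Repl A₁ A₂ (Fm.or B₁ C₁) (Fm.or B₂ C₂)

/-- `A₁` and `A₂` are synonymous in BD: every formula `B₁` is interderivable
with any formula `B₂` obtained from it by replacing some or all occurrences of
`A₁` by `A₂`. -/
def Synonymous (A₁ A₂ : Fm) : Prop :=
  ∀ B₁ B₂ : Fm, Repl A₁ A₂ B₁ B₂ → Con {B₁} {B₂} ∧ Con {B₂} {B₁}

/-- in Belnap-Dunn logic, two formulas are synonymous iff each is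
a consequence of the other and the negation of each is a consequence of the
negation of the other. -/
theorem stmt7 (A₁ A₂ : Fm) :
    Synonymous A₁ A₂ ↔
      (Con {A₁} {A₂} ∧ Con {A₂} {A₁} ∧
        Con {Fm.neg A₁} {Fm.neg A₂} ∧ Con {Fm.neg A₂} {Fm.neg A₁}) := by
  have con_iff : ∀ A B : Fm, Con {A} {B} ↔
      ∀ v, V4.desig (val v A) → V4.desig (val v B) := by
    intro A B
    simp [Con]
  constructor
  · intro h
    exact ⟨(h A₁ A₂ .repl).1, (h A₁ A₂ .repl).2,
      (h _ _ (.neg .repl)).1, (h _ _ (.neg .repl)).2⟩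
  · rintro ⟨h1, h2, h3, h4⟩
    rw [con_iff] at h1 h2 h3 h4
    have key : ∀ v, val v A₁ = val v A₂ := by
      intro v
      have e1 := h1 v; have e2 := h2 v
      have e3 := h3 v; have e4 := h4 v
      simp only [val] at e3 e4
      revert e1 e2 e3 e4
      generalize val v A₁ = x
      generalize val v A₂ = y
      revert x y
      intro x y e1 e2 e3 e4
      cases x <;> cases y <;> simp_all [V4.desig, V4.neg4]
    have rep : ∀ B₁ B₂ : Fm, Repl A₁ A₂ B₁ B₂ → ∀ v, val v B₁ = val v B₂ := by
      intro B₁ B₂ hR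
      induction hR with
      | refl B => intro v; rfl
      | repl => exact key
      | neg _ ih => intro v; simp [val, ih v]
      | and _ _ ih1 ih2 => intro v; simp [val, ih1 v, ih2 v]
      | or _ _ ih1 ih2 => intro v; simp [val, ih1 v, ih2 v]
    intro B₁ B₂ hR
    constructor <;> rw [con_iff] <;> intro v <;> rw [rep B₁ B₂ hR v] <;> exact id

end BD7
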